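/- Let U = {(v₁,…,v₆) ∈ ℝ⁶ : cos v₅ ≠ 0} and define on U the vector fields X₁ᴿ = ∂/∂v₁, X₂ᴿ = v₁ ∂/∂v₁ + ∂/∂v₂, X₃ᴿ = v₁² ∂/∂v₁ + 2v₁ ∂/∂v₂ + e^{v₂} ∂/∂v₃, X₄ᴿ = ∂/∂v₄, X₅ᴿ = sin v₄ tan v₅ ∂/∂v₄ + cos v₄ ∂/∂v₅ + (sin v₄ / cos v₅) ∂/∂v₆, X₆ᴿ = cos v₄ tan v₅ ∂/∂v₄ − sin v₄ ∂/∂v₅ + (cos v₄ / cos v₅) ∂/∂v₆. Then at every point of U: [X₁ᴿ,X₂ᴿ] = X₁ᴿ, [X₁ᴿ,X₃ᴿ] = 2X₂ᴿ, [X₂ᴿ,X₃ᴿ] = X₃ᴿ, [X₄ᴿ,X₅ᴿ] = X₆ᴿ, [X₅ᴿ,X₆ᴿ] = X₄ᴿ, [X₄ᴿ,X₆ᴿ] = −X₅ᴿ, and [Xᵢᴿ,Xⱼᴿ] = 0 for all i ∈ {1,2,3} and j ∈ {4,5,6}; hence X₁ᴿ,…,X₆ᴿ span a 6-dimensional Lie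 algebra isomorphic to the direct sum 𝔰𝔩₂ ⊕ 𝔰𝔬₃ (the Vessiot–Guldberg Lie algebra of the Lie system associated with quantum harmonic oscillators with a spin-magnetic term). -/

import Mathlib

/-- The pointwise Lie bracket of two vector fields on (an open subset of) ℝⁿ,
    `[V,W](p) = (DW)(p)(V(p)) − (DV)(p)(W(p))`. -/
noncomputable def vbracket {n : ℕ} (V W : (Fin n → ℝ) → (Fin n → ℝ)) :
    (Fin n → ℝ) → (Fin n → ℝ) :=
  fun p => fderiv ℝ W p (V p) - fderiv ℝ V p (W p)

/-- The right-invariant vector fields X₁ᴿ,…,X₆ᴿ of the Lie system associated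
with quantum harmonic oscillators with a spin-magnetic term, on
U = {cos v₅ ≠ 0} ⊆ ℝ⁶, in coordinates (v₁,…,v₆) = (p 0,…,p 5). -/
noncomputable def osX : Fin 6 → (Fin 6 → ℝ) → (Fin 6 → ℝ) :=
  ![fun _ => ![1, 0, 0, 0, 0, 0],
    fun p => ![p 0, 1, 0, 0, 0, 0],
    fun p => ![(p 0) ^ 2, 2 * p 0, Real.exp (p 1), 0, 0, 0],
    fun _ => ![0, 0, 0, 1, 0, 0],
    fun p => ![0, 0, 0, Real.sin (p 3) * Real.tan (p 4), Real.cos (p 3),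
      Real.sin (p 3) / Real.cos (p 4)],
    fun p => ![0, 0, 0, Real.cos (p 3) * Real.tan (p 4), -Real.sin (p 3),
      Real.cos (p 3) / Real.cos (p 4)]]

/-!
The fields X₁ᴿ, X₂ᴿ, X₃ᴿ depend on and move only the coordinates v₁, v₂, v₃, and X₄ᴿ, X₅ᴿ, X₆ᴿ only
v₄, v₅, v₆. Each field of one triple is therefore constant along every line in the direction of a
field of the other, so the mixed brackets vanish (even without any differentiability, since `fderiv` is `0` where it
does not exist). The remaining brackets are differences of Jacobian-vector products; only
[X₅ᴿ, X₆ᴿ] = X₄ᴿ needs an identity beyond field arithmetic, namely sin² + cos² = 1.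
-/

open Matrix ContinuousLinearMap

theorem fderiv_apply_eq_zero_of_forall_add_smul {E F : Type*} [NormedAddCommGroup E]
    [NormedSpace ℝ E] [NormedAddCommGroup F] [NormedSpace ℝ F] {f : E → F} {x v : E}
    (h : ∀ t : ℝ, f (x + t • v) = f x) : fderiv ℝ f x v = 0 := by
  by_cases hf : DifferentiableAt ℝ f x
  · rw [← hf.lineDeriv_eq_fderiv, lineDeriv]
    simp only [h, deriv_const]
  · simp [fderiv_zero_of_not_differentiableAt hf]

section VectorFields

variable {m n : ℕ} {V W : (Fin n → ℝ) → (Fin n → ℝ)} {p : Fin n → ℝ}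

theorem vbracket_eq_of_hasFDerivAt {DV DW : (Fin n → ℝ) →L[ℝ] (Fin n → ℝ)}
    (hV : HasFDerivAt V DV p) (hW : HasFDerivAt W DW p) :
    vbracket V W p = DW (V p) - DV (W p) := by
  rw [vbracket, hV.fderiv, hW.fderiv]

theorem vbracket_eq_zero_of_separated (s : Set (Fin n))
    (hV : ∀ q, ∀ i ∉ s, V q i = 0) (hW : ∀ q, ∀ i ∈ s, W q i = 0)
    (hV' : ∀ q v, (∀ i ∈ s, v i = 0) → V (q + v) = V q)
    (hW' : ∀ q v, (∀ i ∉ s, v i = 0) → W (q + v) = W q) :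
    vbracket V W = 0 := by
  ext p : 1
  have hWV : fderiv ℝ W p (V p) = 0 := fderiv_apply_eq_zero_of_forall_add_smul fun t =>
    hW' p _ fun i hi => by simp [hV p i hi]
  have hVW : fderiv ℝ V p (W p) = 0 := fderiv_apply_eq_zero_of_forall_add_smul fun t =>
    hV' p _ fun i hi => by simp [hW p i hi]
  simp [vbracket, hWV, hVW]

theorem hasFDerivAt_toLin'_of_rows {f : (Fin n → ℝ) → (Fin m → ℝ)} {J : Matrix (Fin m) (Fin n) ℝ}
    (h : ∀ i, HasFDerivAt (fun q => f q i) (∑ j, J i j • proj (R := ℝ) (φ := fun _ => ℝ) j) p) :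
    HasFDerivAt f (toLin' J).toContinuousLinearMap p := by
  refine hasFDerivAt_pi'' fun i => (h i).congr_fderiv ?_
  ext v
  simp [mulVec, dotProduct]

theorem HasDerivAt.comp_hasFDerivAt_apply {g : ℝ → ℝ} {g' : ℝ} (i : Fin n)
    (hg : HasDerivAt g g' (p i)) :
    HasFDerivAt (fun q : Fin n → ℝ => g (q i)) (g' • proj (R := ℝ) (φ := fun _ => ℝ) i) p :=
  hg.comp_hasFDerivAt p (hasFDerivAt_apply i p)

end VectorFields

section Jacobians

variable (p : Fin 6 → ℝ)

theorem hasFDerivAt_osX_one :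
    HasFDerivAt (osX 1) (toLin' !![1, 0, 0, 0, 0, 0; 0, 0, 0, 0, 0, 0; 0, 0, 0, 0, 0, 0;
      0, 0, 0, 0, 0, 0; 0, 0, 0, 0, 0, 0; 0, 0, 0, 0, 0, 0]).toContinuousLinearMap p := by
  refine hasFDerivAt_toLin'_of_rows fun i => ?_
  fin_cases i <;> simp [osX, Fin.sum_univ_succ, hasFDerivAt_apply, hasFDerivAt_const]

theorem hasFDerivAt_osX_two :
    HasFDerivAt (osX 2) (toLin' !![2 * p 0, 0, 0, 0, 0, 0; 2, 0, 0, 0, 0, 0;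
      0, Real.exp (p 1), 0, 0, 0, 0; 0, 0, 0, 0, 0, 0; 0, 0, 0, 0, 0, 0;
      0, 0, 0, 0, 0, 0]).toContinuousLinearMap p := by
  refine hasFDerivAt_toLin'_of_rows fun i => ?_
  have hsq := (hasDerivAt_pow 2 (p 0)).comp_hasFDerivAt_apply 0
  have hexp := (Real.hasDerivAt_exp (p 1)).comp_hasFDerivAt_apply 1
  fin_cases i <;> simp [osX, Fin.sum_univ_succ, hasFDerivAt_const, hexp]
  · simpa using hsq
  · exact (hasFDerivAt_apply 0 p).const_mul 2

variable {p} (hp : Real.cos (p 4) ≠ 0)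
include hp

theorem hasFDerivAt_osX_four :
    HasFDerivAt (osX 4) (toLin' !![0, 0, 0, 0, 0, 0; 0, 0, 0, 0, 0, 0; 0, 0, 0, 0, 0, 0;
      0, 0, 0, Real.cos (p 3) * Real.tan (p 4), Real.sin (p 3) / Real.cos (p 4) ^ 2, 0;
      0, 0, 0, -Real.sin (p 3), 0, 0;
      0, 0, 0, Real.cos (p 3) / Real.cos (p 4),
        Real.sin (p 3) * Real.sin (p 4) / Real.cos (p 4) ^ 2, 0]).toContinuousLinearMap p := by
  have hsin3 := (Real.hasDerivAt_sin (p 3)).comp_hasFDerivAt_apply 3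
  have hcos3 := (Real.hasDerivAt_cos (p 3)).comp_hasFDerivAt_apply 3
  have htan4 := (Real.hasDerivAt_tan hp).comp_hasFDerivAt_apply 4
  have hsec4 := ((Real.hasDerivAt_cos (p 4)).inv hp).comp_hasFDerivAt_apply 4
  refine hasFDerivAt_toLin'_of_rows fun i => ?_
  fin_cases i <;> simp [osX, Fin.sum_univ_succ, hasFDerivAt_const, hcos3]
  · exact (hsin3.mul htan4).congr_fderiv (by ext; simp; ring)
  · exact (hsin3.mul hsec4).congr_fderiv (by ext; simp; ring)

theorem hasFDerivAt_osX_five :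
    HasFDerivAt (osX 5) (toLin' !![0, 0, 0, 0, 0, 0; 0, 0, 0, 0, 0, 0; 0, 0, 0, 0, 0, 0;
      0, 0, 0, -Real.sin (p 3) * Real.tan (p 4), Real.cos (p 3) / Real.cos (p 4) ^ 2, 0;
      0, 0, 0, -Real.cos (p 3), 0, 0;
      0, 0, 0, -Real.sin (p 3) / Real.cos (p 4),
        Real.cos (p 3) * Real.sin (p 4) / Real.cos (p 4) ^ 2, 0]).toContinuousLinearMap p := by
  have hsin3 := (Real.hasDerivAt_sin (p 3)).comp_hasFDerivAt_apply 3
  have hcos3 := (Real.hasDerivAt_cos (p 3)).comp_hasFDerivAt_apply 3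
  have htan4 := (Real.hasDerivAt_tan hp).comp_hasFDerivAt_apply 4
  have hsec4 := ((Real.hasDerivAt_cos (p 4)).inv hp).comp_hasFDerivAt_apply 4
  refine hasFDerivAt_toLin'_of_rows fun i => ?_
  fin_cases i <;> simp [osX, Fin.sum_univ_succ, hasFDerivAt_const]
  · exact (hcos3.mul htan4).congr_fderiv (by ext; simp; ring)
  · exact hsin3.neg.congr_fderiv (by ext; simp)
  · exact (hcos3.mul hsec4).congr_fderiv (by ext; simp; ring)

end Jacobians

theorem osX_apply_of_lt {i : Fin 6} (hi : i < 3) (q : Fin 6 → ℝ) {k : Fin 6} (hk : 3 ≤ k) :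
    osX i q k = 0 := by
  fin_cases i <;> fin_cases k <;> simp_all [osX]

theorem osX_apply_of_ge {j : Fin 6} (hj : 3 ≤ j) (q : Fin 6 → ℝ) {k : Fin 6} (hk : k < 3) :
    osX j q k = 0 := by
  fin_cases j <;> fin_cases k <;> simp_all [osX]

theorem osX_add_of_lt {i : Fin 6} (hi : i < 3) (q v : Fin 6 → ℝ) (hv : ∀ k < 3, v k = 0) :
    osX i (q + v) = osX i q := by
  fin_cases i <;> simp_all [osX]

theorem osX_add_of_ge {j : Fin 6} (hj : 3 ≤ j) (q v : Fin 6 → ℝ) (hv : ∀ k, 3 ≤ k → v k = 0) :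
    osX j (q + v) = osX j q := by
  fin_cases j <;> simp_all [osX]

theorem vbracket_osX_four_five {p : Fin 6 → ℝ} (hp : Real.cos (p 4) ≠ 0) :
    vbracket (osX 4) (osX 5) p = osX 3 p := by
  rw [vbracket_eq_of_hasFDerivAt (hasFDerivAt_osX_four hp) (hasFDerivAt_osX_five hp)]
  ext k; fin_cases k <;> simp [osX, Real.tan_eq_sin_div_cos] <;> field_simp
  · linear_combination (1 - Real.sin (p 4) ^ 2) * Real.sin_sq_add_cos_sq (p 3) -
      Real.sin_sq_add_cos_sq (p 4)
  all_goals ring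

theorem vbracket_osX_eq_zero_of_lt_of_ge {i j : Fin 6} (hi : i < 3) (hj : 3 ≤ j) :
    vbracket (osX i) (osX j) = 0 :=
  vbracket_eq_zero_of_separated {k | k < 3}
    (fun q _ hk => osX_apply_of_lt hi q (not_lt.1 hk)) (fun q _ hk => osX_apply_of_ge hj q hk)
    (fun q v hv => osX_add_of_lt hi q v hv)
    (fun q v hv => osX_add_of_ge hj q v fun k hk => hv k hk.not_gt)

/-- At every point of U = {cos v₅ ≠ 0}: [X₁ᴿ,X₂ᴿ] = X₁ᴿ, [X₁ᴿ,X₃ᴿ] = 2X₂ᴿ,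
[X₂ᴿ,X₃ᴿ] = X₃ᴿ, [X₄ᴿ,X₅ᴿ] = X₆ᴿ, [X₅ᴿ,X₆ᴿ] = X₄ᴿ, [X₄ᴿ,X₆ᴿ] = −X₅ᴿ, and
[Xᵢᴿ,Xⱼᴿ] = 0 for i ∈ {1,2,3}, j ∈ {4,5,6}: the vector fields span a Lie
algebra isomorphic to 𝔰𝔩₂ ⊕ 𝔰𝔬₃. -/
theorem spin_magnetic_oscillator_commutation_relations :
    ∀ p : Fin 6 → ℝ, Real.cos (p 4) ≠ 0 →
      vbracket (osX 0) (osX 1) p = osX 0 p ∧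
      vbracket (osX 0) (osX 2) p = (2 : ℝ) • osX 1 p ∧
      vbracket (osX 1) (osX 2) p = osX 2 p ∧
      vbracket (osX 3) (osX 4) p = osX 5 p ∧
      vbracket (osX 4) (osX 5) p = osX 3 p ∧
      vbracket (osX 3) (osX 5) p = -(osX 4 p) ∧
      (∀ i j : Fin 6, i < 3 → 3 ≤ j → vbracket (osX i) (osX j) p = 0) := by
  intro p hp
  have h0 : HasFDerivAt (𝕜 := ℝ) (osX 0) 0 p := hasFDerivAt_const _ _
  have h1 := hasFDerivAt_osX_one p
  have h2 := hasFDerivAt_osX_two p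
  have h3 : HasFDerivAt (𝕜 := ℝ) (osX 3) 0 p := hasFDerivAt_const _ _
  have h4 := hasFDerivAt_osX_four hp
  have h5 := hasFDerivAt_osX_five hp
  refine ⟨?_, ?_, ?_, ?_, vbracket_osX_four_five hp, ?_, fun i j hi hj => ?_⟩
  · rw [vbracket_eq_of_hasFDerivAt h0 h1]; ext k; fin_cases k <;> simp [osX]
  · rw [vbracket_eq_of_hasFDerivAt h0 h2]; ext k; fin_cases k <;> simp [osX]
  · rw [vbracket_eq_of_hasFDerivAt h1 h2]; ext k; fin_cases k <;> simp [osX] <;> ring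
  · rw [vbracket_eq_of_hasFDerivAt h3 h4]; ext k; fin_cases k <;> simp [osX]
  · rw [vbracket_eq_of_hasFDerivAt h3 h5]; ext k; fin_cases k <;> simp [osX, neg_div]
  · rw [vbracket_osX_eq_zero_of_lt_of_ge hi hj, Pi.zero_apply]
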